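/- Let 0 < p ≤ ∞, 1 < p, and suppose f : ℝ → ℝ is locally absolutely continuous with f' ∈ L^p(ℝ). Then for every j ≥ 0 and ν ∈ ℤ, |2^{j+1} ∫ f(x) h̃_{j,ν}(x) dx| ≤ C · 2^{-j/p'} · (∫_{[ν 2^{-j-1}, (ν+2) 2^{-j-1}]} |f'|^p dx)^{1/p}, where 1/p + 1/p' = 1 and C is an absolute constant. -/

import Mathlib

/-!
The dilated Haar function is `+1` on the left half and `-1` on the right half of an interval
`I` of length `2⁻ʲ`, so the coefficient is the difference of the integrals of `f` over the two
halves. Subtracting `f` at the midpoint from both (the halves have equal length), the coefficient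
is bounded by `|I| · sup_I |f - f(mid)| ≤ |I| ∫_I |f'|`, and Hölder on `I` turns `∫_I |f'|` into
`|I|^{1/p'} ‖f'‖_{L^p(I)}`; the factor `2^{j+1} |I| = 2` gives `C = 2`.
-/

open MeasureTheory Real

/-- The Haar mother function `h = 𝟙_{[0,1/2)} - 𝟙_{[1/2,1)}`. -/
noncomputable def haar (x : ℝ) : ℝ :=
  if 0 ≤ x ∧ x < 1/2 then 1 else if 1/2 ≤ x ∧ x < 1 then -1 else 0

open Set
open scoped Interval

lemma mul_haar_comp_eq_indicator_sub {A : ℝ} (hA : 0 < A) (f : ℝ → ℝ) (c x : ℝ) :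
    f x * haar (A * x - c) =
      (Ico (c / A) ((c + 1/2) / A)).indicator f x -
        (Ico ((c + 1/2) / A) ((c + 1) / A)).indicator f x := by
  simp only [haar, indicator_apply, mem_Ico, div_le_iff₀ hA, lt_div_iff₀ hA]
  split_ifs <;> grind

lemma integral_mul_haar_comp {A : ℝ} (hA : 0 < A) {f : ℝ → ℝ} {c : ℝ}
    (hf : IntegrableOn f (Icc (c / A) ((c + 1) / A))) :
    ∫ x, f x * haar (A * x - c) =
      (∫ x in c / A..(c + 1/2) / A, f x) - ∫ x in (c + 1/2) / A..(c + 1) / A, f x := by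
  have h₁ : c / A ≤ (c + 1/2) / A := by gcongr; linarith
  have h₂ : (c + 1/2) / A ≤ (c + 1) / A := by gcongr; linarith
  have hf₁ : IntegrableOn f (Ico (c / A) ((c + 1/2) / A)) :=
    hf.mono_set (Ico_subset_Icc_self.trans (Icc_subset_Icc le_rfl h₂))
  have hf₂ : IntegrableOn f (Ico ((c + 1/2) / A) ((c + 1) / A)) :=
    hf.mono_set (Ico_subset_Icc_self.trans (Icc_subset_Icc h₁ le_rfl))
  simp_rw [mul_haar_comp_eq_indicator_sub hA]
  rw [integral_sub (hf₁.integrable_indicator measurableSet_Ico)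
      (hf₂.integrable_indicator measurableSet_Ico),
    integral_indicator measurableSet_Ico, integral_indicator measurableSet_Ico,
    integral_Ico_eq_integral_Ioc, integral_Ico_eq_integral_Ioc,
    intervalIntegral.integral_of_le h₁, intervalIntegral.integral_of_le h₂]

lemma abs_intervalIntegral_sub_mul_le {g : ℝ → ℝ} {a b y K : ℝ} (hab : a ≤ b)
    (hg : IntervalIntegrable g volume a b) (h : ∀ x ∈ Icc a b, |g x - y| ≤ K) :
    |(∫ x in a..b, g x) - (b - a) * y| ≤ (b - a) * K := by
  have hK : ∀ x ∈ Ι a b, ‖g x - y‖ ≤ K := fun x hx =>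
    h x (Ioc_subset_Icc_self (uIoc_of_le hab ▸ hx))
  simpa [intervalIntegral.integral_sub hg intervalIntegrable_const,
    abs_of_nonneg (sub_nonneg.2 hab), mul_comm] using intervalIntegral.norm_integral_le_of_norm_le_const hK

section Primitive

variable {f f' : ℝ → ℝ} (hf : ∀ x, f x = f 0 + ∫ t in (0:ℝ)..x, f' t)
  (hf' : LocallyIntegrable f' volume)
include hf hf'

lemma continuous_of_eq_primitive : Continuous f := by
  rw [funext hf]
  exact continuous_const.add (intervalIntegral.continuous_primitive
    (fun a b => (hf'.integrableOn_isCompact isCompact_uIcc).intervalIntegrable) 0)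

lemma sub_eq_intervalIntegral_of_eq_primitive (x y : ℝ) : f y - f x = ∫ t in x..y, f' t := by
  have hii (u : ℝ) : IntervalIntegrable f' volume 0 u :=
    (hf'.integrableOn_isCompact isCompact_uIcc).intervalIntegrable
  rw [hf x, hf y, ← intervalIntegral.integral_interval_sub_left (hii y) (hii x)]
  ring

lemma abs_sub_le_setIntegral_abs_of_eq_primitive {a b x y : ℝ} (hx : x ∈ Icc a b)
    (hy : y ∈ Icc a b) : |f y - f x| ≤ ∫ t in Icc a b, |f' t| := by
  rw [sub_eq_intervalIntegral_of_eq_primitive hf hf']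
  calc |∫ t in x..y, f' t| ≤ ∫ t in Ι x y, |f' t| :=
        intervalIntegral.norm_integral_le_integral_norm_uIoc (f := f')
    _ ≤ ∫ t in Icc a b, |f' t| :=
        setIntegral_mono_set (hf'.integrableOn_isCompact isCompact_Icc).abs
          (.of_forall fun _ => abs_nonneg _)
          (uIoc_subset_uIcc.trans (uIcc_subset_Icc hx hy)).eventuallyLE

lemma abs_integral_sub_integral_le_of_eq_primitive {a m b : ℝ} (ham : a ≤ m) (hmb : m ≤ b)
    (hmid : m - a = b - m) :
    |(∫ x in a..m, f x) - ∫ x in m..b, f x| ≤ (b - a) * ∫ t in Icc a b, |f' t| := by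
  have hfc := continuous_of_eq_primitive hf hf'
  have hm : m ∈ Icc a b := ⟨ham, hmb⟩
  have h₁ := abs_intervalIntegral_sub_mul_le ham (hfc.intervalIntegrable a m) fun x hx =>
    abs_sub_le_setIntegral_abs_of_eq_primitive hf hf' hm (Icc_subset_Icc le_rfl hmb hx)
  have h₂ := abs_intervalIntegral_sub_mul_le hmb (hfc.intervalIntegrable m b) fun x hx =>
    abs_sub_le_setIntegral_abs_of_eq_primitive hf hf' hm (Icc_subset_Icc ham le_rfl hx)
  -- the two mean values `f m` cancel because the halves have equal length
  calc |(∫ x in a..m, f x) - ∫ x in m..b, f x|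
      = |((∫ x in a..m, f x) - (m - a) * f m) - ((∫ x in m..b, f x) - (b - m) * f m)| := by
        rw [hmid]; ring_nf
    _ ≤ _ := (abs_sub _ _).trans (add_le_add h₁ h₂)
    _ = _ := by ring

lemma abs_integral_mul_haar_comp_le {A : ℝ} (hA : 0 < A) (c : ℝ) :
    |∫ x, f x * haar (A * x - c)| ≤ A⁻¹ * ∫ t in Icc (c / A) ((c + 1) / A), |f' t| := by
  have h₁ : c / A ≤ (c + 1/2) / A := by gcongr; linarith
  have h₂ : (c + 1/2) / A ≤ (c + 1) / A := by gcongr; linarith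
  have hlen : (c + 1) / A - c / A = A⁻¹ := by field_simp; ring
  rw [integral_mul_haar_comp hA (continuous_of_eq_primitive hf hf').integrableOn_Icc, ← hlen]
  exact abs_integral_sub_integral_le_of_eq_primitive hf hf' h₁ h₂ (by ring)

end Primitive

lemma integral_abs_le_Lp_mul_measureReal {α : Type*} [MeasurableSpace α] {μ : Measure α}
    [IsFiniteMeasure μ] {p q : ℝ} (hpq : p.HolderConjugate q) {g : α → ℝ}
    (hg : MemLp g (ENNReal.ofReal p) μ) :
    ∫ x, |g x| ∂μ ≤ (∫ x, |g x| ^ p ∂μ) ^ (1 / p) * μ.real univ ^ (1 / q) := by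
  simpa using integral_mul_le_Lp_mul_Lq_of_nonneg hpq (.of_forall fun x => abs_nonneg (g x))
    (.of_forall fun _ => zero_le_one) hg.norm (memLp_const 1)

/-- For `1 < p` and `f` locally absolutely continuous with `f' ∈ L^p`,
`|2^{j+1} ∫ f h̃_{j,ν}| ≤ C 2^{-j/p'} (∫_{[ν2^{-j-1},(ν+2)2^{-j-1}]} |f'|^p)^{1/p}`
with an absolute constant `C`. -/
theorem shifted_haar_coefficient_bound :
    ∃ C : ℝ, 0 < C ∧
      ∀ (p p' : ℝ), 1 < p → 1 / p + 1 / p' = 1 →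
      ∀ (f f' : ℝ → ℝ),
        (∀ x : ℝ, f x = f 0 + ∫ t in (0:ℝ)..x, f' t) →
        LocallyIntegrable f' volume →
        MemLp f' (ENNReal.ofReal p) volume →
        ∀ (j : ℕ) (ν : ℤ),
          |2 ^ (j+1) * ∫ x : ℝ, f x * haar (2 ^ j * x - (ν : ℝ) / 2)| ≤
            C * 2 ^ (-(j:ℝ) / p') *
              (∫ x in Set.Icc ((ν : ℝ) * 2 ^ (-(j:ℝ) - 1)) (((ν : ℝ) + 2) * 2 ^ (-(j:ℝ) - 1)),
                |f' x| ^ p) ^ (1/p) := by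
  refine ⟨2, two_pos, fun p p' hp hpp' f f' hf hf' hf'p j ν => ?_⟩
  have hpq : p.HolderConjugate p' := Real.holderConjugate_iff.mpr ⟨hp, by simpa using hpp'⟩
  set A : ℝ := 2 ^ j
  have hA : 0 < A := by positivity
  have hAinv : (2:ℝ) ^ (-(j:ℝ) - 1) = (2 * A)⁻¹ := by
    rw [sub_eq_add_neg, ← neg_add, rpow_neg zero_le_two, rpow_add_one two_ne_zero, rpow_natCast,
      mul_comm]
  have hlo : (ν : ℝ) * 2 ^ (-(j:ℝ) - 1) = (ν / 2) / A := by rw [hAinv]; field_simp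
  have hhi : ((ν : ℝ) + 2) * 2 ^ (-(j:ℝ) - 1) = (ν / 2 + 1) / A := by rw [hAinv]; field_simp
  rw [hlo, hhi, abs_mul, abs_of_pos (by positivity), pow_succ]
  set I := Icc ((ν : ℝ) / 2 / A) ((ν / 2 + 1) / A)
  have hvol : volume.real I = A⁻¹ := by
    rw [Real.volume_real_Icc_of_le (by gcongr; linarith)]; field_simp; ring
  have hdual : (A⁻¹) ^ (1 / p') = (2:ℝ) ^ (-(j:ℝ) / p') := by
    rw [show A⁻¹ = (2:ℝ) ^ (-(j:ℝ)) by rw [rpow_neg zero_le_two, rpow_natCast],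
      ← rpow_mul zero_le_two, mul_one_div]
  have hholder := integral_abs_le_Lp_mul_measureReal hpq (hf'p.restrict I)
  rw [measureReal_restrict_apply_univ, hvol, hdual] at hholder
  calc A * 2 * |∫ x, f x * haar (A * x - ν / 2)|
      ≤ A * 2 * (A⁻¹ * ∫ t in I, |f' t|) := by
        gcongr; exact abs_integral_mul_haar_comp_le hf hf' hA _
    _ = 2 * ∫ t in I, |f' t| := by field_simp
    _ ≤ _ := by rw [mul_assoc]; gcongr; linarith
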